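/- arXiv:0908.2078 — 4 statements merged into one kernel-verified Lean document; each statement's English description precedes it below -/
import Mathlib

section
/- Let T[ρ] = Σ_k M_k ρ M_k† be a trace-preserving completely positive map on a finite-dimensional Hilbert space H = H_S ⊕ H_R, with each Kraus operator written in block form M_k = [[M_{k,S}, M_{k,P}],[M_{k,Q}, M_{k,R}]]. Then the set of density operators with support contained in H_S is invariant under T if and only if M_{k,Q} = 0 for all k. -/
/-!
Write `M k = [[A k, B k], [C k, D k]]`. A state `σ ⊕ 0` is sent by each Kraus term to
`[[A σ A†, A σ C†], [C σ A†, C σ C†]]`, so if every `C k` vanishes the image is again supported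
on `H_S`. Conversely, the pure state on the `i`-th basis vector of `H_S` is sent to an operator
whose `j`-th diagonal entry in the `H_R` block is `∑ k, |(C k) j i|²`; invariance makes this
vanish, hence every entry of every `C k` vanishes.
-/

open Matrix Finset
open scoped ComplexOrder

namespace Matrix

variable {ι l m n o R : Type*}

theorem sum_fromBlocks [AddCommMonoid R] (s : Finset ι) (A : ι → Matrix n l R)
    (B : ι → Matrix n m R) (C : ι → Matrix o l R) (D : ι → Matrix o m R) :
    ∑ k ∈ s, fromBlocks (A k) (B k) (C k) (D k) =
      fromBlocks (∑ k ∈ s, A k) (∑ k ∈ s, B k) (∑ k ∈ s, C k) (∑ k ∈ s, D k) := by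
  classical
  induction s using Finset.induction_on with
  | empty => simp
  | insert k s hk ih => simp [Finset.sum_insert hk, ih, fromBlocks_add]

theorem mul_fromBlocks_mul_conjTranspose_of_toBlocks₂₁_eq_zero [Fintype l] [Fintype m]
    [Semiring R] [StarRing R] {X : Matrix (l ⊕ m) (l ⊕ m) R} (hX : X.toBlocks₂₁ = 0)
    (σ : Matrix l l R) :
    X * fromBlocks σ 0 0 0 * Xᴴ = fromBlocks (X.toBlocks₁₁ * σ * X.toBlocks₁₁ᴴ) 0 0 0 := by
  rw [← fromBlocks_toBlocks X, hX]
  simp [fromBlocks_conjTranspose, fromBlocks_multiply]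

theorem mul_single_mul_conjTranspose_apply_self [Fintype n] [DecidableEq n] [Semiring R]
    [StarRing R] (X : Matrix n n R) (i a : n) :
    (X * single i i (1 : R) * Xᴴ) a a = X a i * star (X a i) := by
  simp [mul_apply, single_apply, ite_and]

theorem posSemidef_single_self [Fintype n] [DecidableEq n] [CommRing R] [PartialOrder R]
    [StarRing R] [StarOrderedRing R] (i : n) : (single i i (1 : R)).PosSemidef := by
  simpa [single_eq_single_vecMulVec_single] using
    posSemidef_vecMulVec_self_star (Pi.single i (1 : R))

end Matrix

theorem invariance_iff_lower_left_blocks_vanish_general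
    (m r K : ℕ)
    (M : Fin K → Matrix (Fin m ⊕ Fin r) (Fin m ⊕ Fin r) ℂ) :
    (∀ ρ : Matrix (Fin m ⊕ Fin r) (Fin m ⊕ Fin r) ℂ,
        ρ.PosSemidef → ρ.trace = 1 →
        ρ.toBlocks₁₂ = 0 → ρ.toBlocks₂₁ = 0 → ρ.toBlocks₂₂ = 0 →
        ((∑ k, M k * ρ * (M k)ᴴ).toBlocks₁₂ = 0 ∧
         (∑ k, M k * ρ * (M k)ᴴ).toBlocks₂₁ = 0 ∧
         (∑ k, M k * ρ * (M k)ᴴ).toBlocks₂₂ = 0)) ↔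
    (∀ k, (M k).toBlocks₂₁ = 0) := by
  constructor
  · intro hInv k
    ext j i
    obtain ⟨-, -, hImage⟩ := hInv (single (.inl i) (.inl i) 1) (posSemidef_single_self _)
      (trace_single_eq_same _ _) (by ext; simp [toBlocks₁₂]) (by ext; simp [toBlocks₂₁])
      (by ext; simp [toBlocks₂₂])
    have hEntry :
        (fun k => M k (.inr j) (.inl i)) ⬝ᵥ star (fun k => M k (.inr j) (.inl i)) = 0 := by
      simpa [Matrix.sum_apply, toBlocks₂₂, mul_single_mul_conjTranspose_apply_self, dotProduct]
        using congr_fun₂ hImage j j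
    exact congr_fun (dotProduct_self_star_eq_zero.mp hEntry) k
  · intro hM ρ _ _ h₁₂ h₂₁ h₂₂
    have hρ : ρ = fromBlocks ρ.toBlocks₁₁ 0 0 0 := by
      rw [← h₁₂, ← h₂₁, ← h₂₂, fromBlocks_toBlocks]
    rw [hρ]
    simp only [mul_fromBlocks_mul_conjTranspose_of_toBlocks₂₁_eq_zero (hM _), sum_fromBlocks,
      sum_const_zero, toBlocks_fromBlocks₁₂, toBlocks_fromBlocks₂₁, toBlocks_fromBlocks₂₂, and_self]

/-- invariance of the set of density operators supported on `H_S`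
holds iff all lower-left Kraus blocks vanish. -/
theorem invariance_iff_lower_left_blocks_vanish
    (m r K : ℕ) (hm : 0 < m)
    (M : Fin K → Matrix (Fin m ⊕ Fin r) (Fin m ⊕ Fin r) ℂ)
    (hTP : ∑ k, (M k)ᴴ * M k = 1) :
    (∀ ρ : Matrix (Fin m ⊕ Fin r) (Fin m ⊕ Fin r) ℂ,
        ρ.PosSemidef → ρ.trace = 1 →
        ρ.toBlocks₁₂ = 0 → ρ.toBlocks₂₁ = 0 → ρ.toBlocks₂₂ = 0 →
        ((∑ k, M k * ρ * (M k)ᴴ).toBlocks₁₂ = 0 ∧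
         (∑ k, M k * ρ * (M k)ᴴ).toBlocks₂₁ = 0 ∧
         (∑ k, M k * ρ * (M k)ᴴ).toBlocks₂₂ = 0)) ↔
    (∀ k, (M k).toBlocks₂₁ = 0) :=
  invariance_iff_lower_left_blocks_vanish_general m r K M
end

section
/- Let T[ρ] = Σ_k M_k ρ M_k† be a TPCP map with M_{k,Q}=0 for all k (so H_S is invariant), let Π_R be the orthogonal projection onto H_R, and define V(ρ) = Tr(Π_R ρ). Then for every density operator ρ, V(T[ρ]) − V(ρ) = Tr(Σ_k M_{k,R} ρ_R M_{k,R}†) − Tr(ρ_R) ≤ 0, where ρ_R = Π_R ρ Π_R restricted to H_R. In particular V is non-increasing along trajectories of the iterated map. -/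
open Matrix Finset
open scoped ComplexOrder

/-!
Since every Kraus operator is block upper triangular, the `R`-block of `T[ρ]` only sees the
`R`-blocks: `(M ρ Mᴴ)₂₂ = M₂₂ ρ₂₂ M₂₂ᴴ`. Reading off the `R`-block of `∑ Mᴴ M = 1` gives
`∑ (M₁₂ᴴ M₁₂ + M₂₂ᴴ M₂₂) = 1`, so by cyclicity of the trace
`Tr ρ₂₂ = ∑ Tr (M₁₂ ρ₂₂ M₁₂ᴴ) + ∑ Tr (M₂₂ ρ₂₂ M₂₂ᴴ)`, and the first sum is nonnegative because
`ρ₂₂` is positive semidefinite. The population lost from `H_R` is exactly what `M₁₂` transfers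
into the invariant subspace `H_S`.
-/

namespace Matrix

section Blocks

variable {α l m n o ι : Type*}

theorem toBlocks₂₂_sum [AddCommMonoid α] (s : Finset ι) (A : ι → Matrix (n ⊕ o) (l ⊕ m) α) :
    (∑ k ∈ s, A k).toBlocks₂₂ = ∑ k ∈ s, (A k).toBlocks₂₂ := by
  ext i j
  simp [toBlocks₂₂, sum_apply]

theorem trace_fromBlocks [AddCommMonoid α] [Fintype n] [Fintype o] (A : Matrix n n α)
    (B : Matrix n o α) (C : Matrix o n α) (D : Matrix o o α) :
    (fromBlocks A B C D).trace = A.trace + D.trace := by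
  simp [trace, Fintype.sum_sum_type]

theorem trace_fromBlocks_zero_one_mul [NonAssocSemiring α] [Fintype n] [Fintype o]
    [DecidableEq o] (X : Matrix (n ⊕ o) (n ⊕ o) α) :
    (fromBlocks 0 0 0 (1 : Matrix o o α) * X).trace = X.toBlocks₂₂.trace := by
  conv_lhs => rw [← fromBlocks_toBlocks X]
  simp [fromBlocks_multiply, trace_fromBlocks]

variable [Semiring α] [StarRing α]

theorem toBlocks₂₂_conjTranspose_mul_self [Fintype l] [Fintype m]
    (A : Matrix (l ⊕ m) (n ⊕ o) α) :
    (Aᴴ * A).toBlocks₂₂ = A.toBlocks₁₂ᴴ * A.toBlocks₁₂ + A.toBlocks₂₂ᴴ * A.toBlocks₂₂ := by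
  conv_lhs => rw [← fromBlocks_toBlocks A]
  rw [fromBlocks_conjTranspose, fromBlocks_multiply, toBlocks_fromBlocks₂₂]

theorem toBlocks₂₂_mul_mul_conjTranspose_of_toBlocks₂₁_eq_zero [Fintype n] [Fintype o]
    {A : Matrix (l ⊕ m) (n ⊕ o) α} (hA : A.toBlocks₂₁ = 0) (X : Matrix (n ⊕ o) (n ⊕ o) α) :
    (A * X * Aᴴ).toBlocks₂₂ = A.toBlocks₂₂ * X.toBlocks₂₂ * A.toBlocks₂₂ᴴ := by
  conv_lhs => rw [← fromBlocks_toBlocks A, hA, ← fromBlocks_toBlocks X]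
  simp [fromBlocks_conjTranspose, fromBlocks_multiply, Matrix.mul_assoc]

end Blocks

section Trace

variable {R l m n ι : Type*} [CommRing R] [Fintype l] [Fintype m] [Fintype n] [Fintype ι]

theorem trace_sum_mul_mul_conjTranspose [StarRing R] (N : ι → Matrix m n R) (ρ : Matrix n n R) :
    (∑ k, N k * ρ * (N k)ᴴ).trace = ((∑ k, (N k)ᴴ * N k) * ρ).trace := by
  simp only [trace_sum, Finset.sum_mul]
  exact Finset.sum_congr rfl fun k _ => trace_mul_cycle _ _ _

variable [PartialOrder R] [StarRing R] [StarOrderedRing R]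

theorem trace_sum_mul_mul_conjTranspose_nonneg {ρ : Matrix n n R} (hρ : ρ.PosSemidef)
    (N : ι → Matrix m n R) : 0 ≤ (∑ k, N k * ρ * (N k)ᴴ).trace :=
  (posSemidef_sum _ fun k _ => hρ.mul_mul_conjTranspose_same (N k)).trace_nonneg

theorem trace_sum_mul_mul_conjTranspose_le [DecidableEq n] {ρ : Matrix n n R} (hρ : ρ.PosSemidef)
    {B : ι → Matrix l n R} {D : ι → Matrix m n R} (hBD : ∑ k, ((B k)ᴴ * B k + (D k)ᴴ * D k) = 1) :
    (∑ k, D k * ρ * (D k)ᴴ).trace ≤ ρ.trace := by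
  have hsplit : ρ.trace = (∑ k, B k * ρ * (B k)ᴴ).trace + (∑ k, D k * ρ * (D k)ᴴ).trace := by
    rw [trace_sum_mul_mul_conjTranspose, trace_sum_mul_mul_conjTranspose, ← trace_add,
      ← Matrix.add_mul, ← Finset.sum_add_distrib, hBD, Matrix.one_mul]
  rw [hsplit]
  exact le_add_of_nonneg_left (trace_sum_mul_mul_conjTranspose_nonneg hρ B)

end Trace

end Matrix

theorem lyapunov_nonincreasing_general
    (m r K : ℕ)
    (M : Fin K → Matrix (Fin m ⊕ Fin r) (Fin m ⊕ Fin r) ℂ)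
    (hTP : ∑ k, (M k)ᴴ * M k = 1)
    (hQ : ∀ k, (M k).toBlocks₂₁ = 0)
    (ρ : Matrix (Fin m ⊕ Fin r) (Fin m ⊕ Fin r) ℂ)
    (hρ : ρ.PosSemidef) :
    (Matrix.fromBlocks 0 0 0 (1 : Matrix (Fin r) (Fin r) ℂ) *
          (∑ k, M k * ρ * (M k)ᴴ)).trace -
        (Matrix.fromBlocks 0 0 0 (1 : Matrix (Fin r) (Fin r) ℂ) * ρ).trace =
      (∑ k, (M k).toBlocks₂₂ * ρ.toBlocks₂₂ * ((M k).toBlocks₂₂)ᴴ).trace -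
        (ρ.toBlocks₂₂).trace ∧
    (Matrix.fromBlocks 0 0 0 (1 : Matrix (Fin r) (Fin r) ℂ) *
          (∑ k, M k * ρ * (M k)ᴴ)).trace -
        (Matrix.fromBlocks 0 0 0 (1 : Matrix (Fin r) (Fin r) ℂ) * ρ).trace ≤ 0 := by
  have hKrausR : ∑ k, ((M k).toBlocks₁₂ᴴ * (M k).toBlocks₁₂ +
      (M k).toBlocks₂₂ᴴ * (M k).toBlocks₂₂) = 1 := by
    have h := congrArg toBlocks₂₂ hTP
    rw [← fromBlocks_one, toBlocks_fromBlocks₂₂, toBlocks₂₂_sum] at h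
    simpa only [toBlocks₂₂_conjTranspose_mul_self] using h
  have hρR : ρ.toBlocks₂₂.PosSemidef := hρ.submatrix Sum.inr
  simp only [trace_fromBlocks_zero_one_mul, toBlocks₂₂_sum,
    toBlocks₂₂_mul_mul_conjTranspose_of_toBlocks₂₁_eq_zero (hQ _), true_and, sub_nonpos]
  exact trace_sum_mul_mul_conjTranspose_le hρR hKrausR

/-- with `H_S` invariant, `V(ρ) = Tr(Π_R ρ)` satisfies
`V(T[ρ]) − V(ρ) = Tr(Σ_k M_{k,R} ρ_R M_{k,R}†) − Tr(ρ_R) ≤ 0`. -/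
theorem lyapunov_nonincreasing
    (m r K : ℕ)
    (M : Fin K → Matrix (Fin m ⊕ Fin r) (Fin m ⊕ Fin r) ℂ)
    (hTP : ∑ k, (M k)ᴴ * M k = 1)
    (hQ : ∀ k, (M k).toBlocks₂₁ = 0)
    (ρ : Matrix (Fin m ⊕ Fin r) (Fin m ⊕ Fin r) ℂ)
    (hρ : ρ.PosSemidef) (htr : ρ.trace = 1) :
    (Matrix.fromBlocks 0 0 0 (1 : Matrix (Fin r) (Fin r) ℂ) *
          (∑ k, M k * ρ * (M k)ᴴ)).trace -
        (Matrix.fromBlocks 0 0 0 (1 : Matrix (Fin r) (Fin r) ℂ) * ρ).trace =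
      (∑ k, (M k).toBlocks₂₂ * ρ.toBlocks₂₂ * ((M k).toBlocks₂₂)ᴴ).trace -
        (ρ.toBlocks₂₂).trace ∧
    (Matrix.fromBlocks 0 0 0 (1 : Matrix (Fin r) (Fin r) ℂ) *
          (∑ k, M k * ρ * (M k)ᴴ)).trace -
        (Matrix.fromBlocks 0 0 0 (1 : Matrix (Fin r) (Fin r) ℂ) * ρ).trace ≤ 0 :=
  lyapunov_nonincreasing_general m r K M hTP hQ ρ hρ
end

section
/- Let W be a set of density operators invariant under a TPCP map T[ρ] = Σ_k M_k ρ M_k†, and let H_W be the span of the union of the supports of all elements of W. Then the set of all density operators with support contained in H_W is invariant under T. -/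
/-!
Write a positive semidefinite `σ` as `C Cᴴ`. Then `∑ₖ Mₖ σ Mₖᴴ = ∑ₖ (Mₖ C)(Mₖ C)ᴴ = B Bᴴ` for the
block row `B = [Mₖ C]ₖ`, whose range is the sum of the ranges of the `Mₖ C`, i.e. of the images
`Mₖ (supp σ)`. For `σ ∈ W` this puts each `Mₖ (supp σ)` inside `supp (T σ) ⊆ H_W`, so every Kraus
operator maps `H_W` into itself; the same formula for `ρ` then gives `supp (T ρ) ⊆ H_W`.
-/

open Matrix Finset
open scoped ComplexOrder

namespace Matrix

variable {𝕜 m n ι : Type*} [RCLike 𝕜] [Fintype m] [Fintype n] [Fintype ι]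

theorem range_mulVecLin_mul_conjTranspose_self (A : Matrix m n 𝕜) :
    LinearMap.range (A * Aᴴ).mulVecLin = LinearMap.range A.mulVecLin := by
  refine Submodule.eq_of_le_of_finrank_le ?_ (rank_self_mul_conjTranspose A).ge
  rw [mulVecLin_mul]
  exact LinearMap.range_comp_le_range _ _

theorem range_mulVecLin_sum_mul_conjTranspose_self (A : ι → Matrix m n 𝕜) :
    LinearMap.range (∑ k, A k * (A k)ᴴ).mulVecLin = ⨆ k, LinearMap.range (A k).mulVecLin := by
  classical
  let B : Matrix m (ι × n) 𝕜 := of fun i p => A p.1 i p.2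
  have hB : B * Bᴴ = ∑ k, A k * (A k)ᴴ := by
    ext i j
    simp [B, mul_apply, Fintype.sum_prod_type, sum_apply]
  rw [← hB, range_mulVecLin_mul_conjTranspose_self]
  apply le_antisymm
  · rintro _ ⟨v, rfl⟩
    have : B *ᵥ v = ∑ k, A k *ᵥ fun j => v (k, j) := by
      ext i
      simp [B, mulVec, dotProduct, Fintype.sum_prod_type]
    rw [mulVecLin_apply, this]
    exact Submodule.sum_mem _ fun k _ => Submodule.mem_iSup_of_mem k ⟨_, rfl⟩
  · refine iSup_le fun k => ?_
    rintro _ ⟨w, rfl⟩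
    refine ⟨fun p => if p.1 = k then w p.2 else 0, ?_⟩
    ext i
    simp [B, mulVec, dotProduct, Fintype.sum_prod_type]

open scoped MatrixOrder in
theorem PosSemidef.exists_eq_mul_conjTranspose_self {σ : Matrix n n 𝕜} (hσ : σ.PosSemidef) :
    ∃ C : Matrix n n 𝕜, σ = C * Cᴴ := by
  classical
  obtain ⟨C, rfl⟩ := CStarAlgebra.nonneg_iff_eq_star_mul_self.mp hσ.nonneg
  exact ⟨Cᴴ, by rw [conjTranspose_conjTranspose]; rfl⟩

def krausMap (M : ι → Matrix n n 𝕜) (ρ : Matrix n n 𝕜) : Matrix n n 𝕜 :=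
  ∑ k, M k * ρ * (M k)ᴴ

theorem posSemidef_krausMap (M : ι → Matrix n n 𝕜) {ρ : Matrix n n 𝕜} (hρ : ρ.PosSemidef) :
    (krausMap M ρ).PosSemidef :=
  posSemidef_sum _ fun k _ => by
    simpa only [Matrix.mul_assoc] using hρ.mul_mul_conjTranspose_same (M k)

theorem trace_krausMap [DecidableEq n] {M : ι → Matrix n n 𝕜} (hM : ∑ k, (M k)ᴴ * M k = 1)
    (ρ : Matrix n n 𝕜) : (krausMap M ρ).trace = ρ.trace :=
  calc (krausMap M ρ).trace
      = ∑ k, ((M k)ᴴ * M k * ρ).trace := by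
        rw [krausMap, trace_sum]
        refine sum_congr rfl fun k _ => ?_
        rw [trace_mul_cycle, Matrix.mul_assoc]
    _ = ρ.trace := by rw [← trace_sum, ← Finset.sum_mul, hM, Matrix.one_mul]

theorem PosSemidef.range_krausMap {ρ : Matrix n n 𝕜} (hρ : ρ.PosSemidef) (M : ι → Matrix n n 𝕜) :
    LinearMap.range (krausMap M ρ).mulVecLin =
      ⨆ k, (LinearMap.range ρ.mulVecLin).map (M k).mulVecLin := by
  classical
  obtain ⟨C, rfl⟩ := hρ.exists_eq_mul_conjTranspose_self
  have hsplit : ∀ k, M k * (C * Cᴴ) * (M k)ᴴ = (M k * C) * (M k * C)ᴴ := fun k => by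
    simp only [conjTranspose_mul, Matrix.mul_assoc]
  rw [range_mulVecLin_mul_conjTranspose_self, krausMap]
  simp only [hsplit, range_mulVecLin_sum_mul_conjTranspose_self, mulVecLin_mul,
    LinearMap.range_comp]

theorem PosSemidef.map_range_le_range_krausMap {ρ : Matrix n n 𝕜} (hρ : ρ.PosSemidef)
    (M : ι → Matrix n n 𝕜) (k : ι) :
    (LinearMap.range ρ.mulVecLin).map (M k).mulVecLin ≤
      LinearMap.range (krausMap M ρ).mulVecLin := by
  rw [hρ.range_krausMap M]
  exact le_iSup (fun k => (LinearMap.range ρ.mulVecLin).map (M k).mulVecLin) k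

end Matrix

/-- if `W` is an invariant set of density operators and `H_W` is the
span of the supports of its elements, then the set of density operators supported
on `H_W` is invariant. -/
theorem support_span_invariant
    (n K : ℕ)
    (M : Fin K → Matrix (Fin n) (Fin n) ℂ)
    (hTP : ∑ k, (M k)ᴴ * M k = 1)
    (W : Set (Matrix (Fin n) (Fin n) ℂ))
    (hW : ∀ ρ ∈ W, ρ.PosSemidef ∧ ρ.trace = 1)
    (hinv : ∀ ρ ∈ W, (∑ k, M k * ρ * (M k)ᴴ) ∈ W) :
    ∀ ρ : Matrix (Fin n) (Fin n) ℂ, ρ.PosSemidef → ρ.trace = 1 →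
      LinearMap.range ρ.mulVecLin ≤ (⨆ σ ∈ W, LinearMap.range σ.mulVecLin) →
      ((∑ k, M k * ρ * (M k)ᴴ).PosSemidef ∧ (∑ k, M k * ρ * (M k)ᴴ).trace = 1 ∧
        LinearMap.range (∑ k, M k * ρ * (M k)ᴴ).mulVecLin ≤
          (⨆ σ ∈ W, LinearMap.range σ.mulVecLin)) := by
  intro ρ hρ hρtr hρW
  set HW := ⨆ σ ∈ W, LinearMap.range σ.mulVecLin
  have hMW : ∀ k, HW.map (M k).mulVecLin ≤ HW := fun k => by
    simp only [HW, Submodule.map_iSup]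
    exact iSup₂_le fun σ hσ => ((hW σ hσ).1.map_range_le_range_krausMap M k).trans
      (le_biSup (fun σ => LinearMap.range σ.mulVecLin) (hinv σ hσ))
  refine ⟨posSemidef_krausMap M hρ, (trace_krausMap hTP ρ).trans hρtr, ?_⟩
  change LinearMap.range (krausMap M ρ).mulVecLin ≤ HW
  rw [hρ.range_krausMap M]
  exact iSup_le fun k => (Submodule.map_mono hρW).trans (hMW k)
end

section
/- Let A = QR be a QR decomposition of a complex n×n matrix A, and for each j let ρ_j denote the rank of the matrix formed by the first j columns of A. Suppose that for all j ≤ j̄ and all i > ρ_j the entry R_{ij} = 0. Then for every j ≤ j̄, the span of the first j columns of A equals the span of the first ρ_j columns of Q. -/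
open Matrix

/-- The span of the first `j` columns of `A`. -/
noncomputable def colSpan (n : ℕ) (A : Matrix (Fin n) (Fin n) ℂ) (j : ℕ) :
    Submodule ℂ (Fin n → ℂ) :=
  Submodule.span ℂ ((fun l => Aᵀ l) '' {l : Fin n | (l : ℕ) < j})

/-- The rank of the matrix formed by the first `j` columns of `A`. -/
noncomputable def colRank (n : ℕ) (A : Matrix (Fin n) (Fin n) ℂ) (j : ℕ) : ℕ :=
  Module.finrank ℂ (colSpan n A j)

lemma colSpan_mono (n : ℕ) (A : Matrix (Fin n) (Fin n) ℂ) {a b : ℕ} (h : a ≤ b) :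
    colSpan n A a ≤ colSpan n A b :=
  Submodule.span_mono (Set.image_mono fun _ hl => lt_of_lt_of_le hl h)

lemma colRank_mono (n : ℕ) (A : Matrix (Fin n) (Fin n) ℂ) {a b : ℕ} (h : a ≤ b) :
    colRank n A a ≤ colRank n A b :=
  Submodule.finrank_mono (colSpan_mono n A h)

/-- if in a QR decomposition `A = QR` all entries `R_{ij}` with
`i > ρ_j` vanish for all columns `j ≤ j̄`, then for every `j ≤ j̄` the span of
the first `j` columns of `A` equals the span of the first `ρ_j` columns of `Q`. -/
theorem spans_of_canonical_QR_columns
    (n : ℕ) (A Q R : Matrix (Fin n) (Fin n) ℂ) (jbar : ℕ)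
    (hQ : Qᴴ * Q = 1)
    (hR : ∀ i j : Fin n, j < i → R i j = 0)
    (hQR : A = Q * R)
    (hzero : ∀ j : Fin n, (j : ℕ) < jbar →
        ∀ i : Fin n, colRank n A ((j : ℕ) + 1) ≤ (i : ℕ) → R i j = 0) :
    ∀ j : Fin n, (j : ℕ) < jbar →
      colSpan n A ((j : ℕ) + 1) = colSpan n Q (colRank n A ((j : ℕ) + 1)) := by
  intro j hj
  set ρ := colRank n A ((j : ℕ) + 1) with hρ
  have hle : colSpan n A ((j : ℕ) + 1) ≤ colSpan n Q ρ := by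
    rw [colSpan, Submodule.span_le]
    rintro x ⟨l, hl, rfl⟩
    have hlj : (l : ℕ) ≤ (j : ℕ) := Nat.lt_succ_iff.mp hl
    have hljbar : (l : ℕ) < jbar := lt_of_le_of_lt hlj hj
    have hkey : ∀ i : Fin n, R i l ≠ 0 → (i : ℕ) < ρ := by
      intro i hi
      by_contra h
      push_neg at h
      exact hi (hzero l hljbar i
        (le_trans (le_trans (colRank_mono n A (Nat.succ_le_succ hlj)) (le_of_eq hρ.symm)) h))
    have hexp : Aᵀ l = ∑ i : Fin n, R i l • Qᵀ i := by
      funext k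
      simp only [hQR, transpose_apply, Matrix.mul_apply, Finset.sum_apply, Pi.smul_apply,
        smul_eq_mul]
      exact Finset.sum_congr rfl fun i _ => mul_comm _ _
    show Aᵀ l ∈ colSpan n Q ρ
    rw [hexp]
    refine Submodule.sum_mem _ fun i _ => ?_
    by_cases h : R i l = 0
    · simp [h]
    · exact Submodule.smul_mem _ _ (Submodule.subset_span ⟨i, hkey i h, rfl⟩)
  have hfin : Module.finrank ℂ (colSpan n Q ρ) ≤ ρ := by
    have hset : ((fun l => Qᵀ l) '' {l : Fin n | (l : ℕ) < ρ}) =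
        ↑(Finset.image (fun l => Qᵀ l) (Finset.univ.filter (fun l : Fin n => (l : ℕ) < ρ))) := by
      ext x; simp
    rw [colSpan, hset]
    refine le_trans (finrank_span_finset_le_card _) (le_trans Finset.card_image_le ?_)
    calc (Finset.univ.filter (fun l : Fin n => (l : ℕ) < ρ)).card
        ≤ (Finset.range ρ).card := by
          refine Finset.card_le_card_of_injOn (fun l => (l : ℕ)) ?_ ?_
          · intro l hl; simp at hl ⊢; exact hl
          · intro a _ b _ h; exact Fin.ext h
      _ = ρ := Finset.card_range ρ
  exact Submodule.eq_of_le_of_finrank_le hle hfin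
end
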